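/- For all integers m and n with 2 ≤ m ≤ n and n ≥ 6, the prime difference graph G_n contains a Hamilton path from 1 to m, i.e., there is a bijective sequence a_1, ..., a_n of {1,...,n} with a_1 = 1, a_n = m, and each consecutive difference |a_i - a_{i+1}| prime. -/

import Mathlib

/-!
The Hamilton paths are built by strong induction on `n`, in steps of `5` and `6`, from an explicit
table for `6 ≤ n ≤ 11`. For `m ≥ 7`, prefix `1, 3, 5, 2, 4` to a path of `{6, …, n}` from `6`
to `m`, i.e. to the path for `n - 5` and `m - 5` shifted by `5`. For `m ≤ 6`, split `{1, …, 6}`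
into a walk from `1` to a neighbour of `7` and a walk from a neighbour of `8` to `m`, and insert
between them the path for `n - 6` from `1` to `2`, shifted by `6`.
-/

/-- `a 0, ..., a (n-1)` is a Hamilton path of `{1,...,n}` with all consecutive
absolute differences prime. -/
def IsPrimeDiffHamPath (n : ℕ) (a : ℕ → ℤ) : Prop :=
  Set.BijOn a (Set.Ico 0 n) (Set.Icc 1 (n : ℤ)) ∧
  (∀ i, i + 1 < n → ((a i - a (i + 1)).natAbs).Prime)

def PrimeDiff (a b : ℕ) : Prop := ((a : ℤ) - b).natAbs.Prime

instance : DecidableRel PrimeDiff := fun _ _ => inferInstanceAs (Decidable (Nat.Prime _))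

theorem primeDiff_add_add_iff {k a b : ℕ} : PrimeDiff (k + a) (k + b) ↔ PrimeDiff a b := by
  simp only [PrimeDiff, Nat.cast_add, add_sub_add_left_eq_sub]

def IsPrimeDiffWalk (u v : ℕ) (l : List ℕ) : Prop :=
  l.IsChain PrimeDiff ∧ l.head? = some u ∧ l.getLast? = some v

instance (u v : ℕ) (l : List ℕ) : Decidable (IsPrimeDiffWalk u v l) :=
  inferInstanceAs (Decidable (_ ∧ _))

namespace IsPrimeDiffWalk

theorem singleton (v : ℕ) : IsPrimeDiffWalk v v [v] := ⟨.singleton v, rfl, rfl⟩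

theorem map_add {u v : ℕ} {l : List ℕ} (h : IsPrimeDiffWalk u v l) (k : ℕ) :
    IsPrimeDiffWalk (k + u) (k + v) (l.map (k + ·)) := by
  obtain ⟨hchain, hhead, hlast⟩ := h
  refine ⟨?_, by simp [hhead], by simp [hlast]⟩
  rw [List.isChain_map]
  exact hchain.imp fun _ _ => primeDiff_add_add_iff.2

theorem splice {u a b v : ℕ} {l₁ t l₂ : List ℕ} (h₁ : IsPrimeDiffWalk u a (l₁ ++ [a]))
    (ht : IsPrimeDiffWalk a b t) (h₂ : IsPrimeDiffWalk b v (b :: l₂)) :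
    IsPrimeDiffWalk u v (l₁ ++ t ++ l₂) := by
  obtain ⟨hchain₁, hhead₁, -⟩ := h₁
  obtain ⟨hchaint, hheadt, hlastt⟩ := ht
  obtain ⟨hchain₂, -, hlast₂⟩ := h₂
  simp_all [IsPrimeDiffWalk, List.isChain_append, List.isChain_cons, List.head?_append,
    List.getLast?_append, List.getLast?_cons]

end IsPrimeDiffWalk

def IsHamPath (n u v : ℕ) (l : List ℕ) : Prop :=
  l.Perm (List.range' 1 n) ∧ IsPrimeDiffWalk u v l

instance (n u v : ℕ) (l : List ℕ) : Decidable (IsHamPath n u v l) :=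
  inferInstanceAs (Decidable (_ ∧ _))

theorem IsHamPath.splice {k n e u v : ℕ} {l₁ l₂ t : List ℕ}
    (hperm : (l₁ ++ l₂).Perm (List.range' 1 k)) (h₁ : IsPrimeDiffWalk u (k + 1) (l₁ ++ [k + 1]))
    (h₂ : IsPrimeDiffWalk (k + e) v ((k + e) :: l₂)) (ht : IsHamPath n 1 e t) :
    IsHamPath (k + n) u v (l₁ ++ t.map (k + ·) ++ l₂) := by
  refine ⟨?_, h₁.splice (ht.2.map_add k) h₂⟩
  have htop : (t.map (k + ·)).Perm (List.range' (k + 1) n) := by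
    rw [← List.map_add_range']; exact ht.1.map _
  have hswap : (l₁ ++ t.map (k + ·) ++ l₂).Perm (l₁ ++ l₂ ++ t.map (k + ·)) := by
    simpa only [List.append_assoc] using List.perm_append_comm.append_left l₁
  rw [← List.range'_append, one_mul, add_comm]
  exact hswap.trans (hperm.append htop)

theorem IsHamPath.prefix_five {n v : ℕ} {t : List ℕ} (ht : IsHamPath n 1 v t) :
    IsHamPath (5 + n) 1 (5 + v) ([1, 3, 5, 2, 4] ++ t.map (5 + ·)) := by
  simpa using IsHamPath.splice (k := 5) (u := 1) (l₁ := [1, 3, 5, 2, 4]) (l₂ := [])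
    (by decide) (by decide) (.singleton _) ht

def basePaths : List (List ℕ) :=
  [[1, 4, 6, 3, 5, 2], [1, 6, 4, 2, 5, 3], [1, 6, 3, 5, 2, 4], [1, 3, 6, 4, 2, 5],
   [1, 3, 5, 2, 4, 6],
   [1, 3, 6, 4, 7, 5, 2], [1, 6, 4, 2, 7, 5, 3], [1, 6, 3, 5, 2, 7, 4], [1, 3, 6, 4, 2, 7, 5],
   [1, 3, 5, 2, 7, 4, 6], [1, 3, 6, 4, 2, 5, 7],
   [1, 3, 5, 8, 6, 4, 7, 2], [1, 4, 2, 7, 5, 8, 6, 3], [1, 3, 6, 8, 5, 2, 7, 4],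
   [1, 3, 8, 6, 4, 2, 7, 5], [1, 3, 8, 5, 2, 7, 4, 6], [1, 3, 5, 8, 6, 4, 2, 7],
   [1, 3, 5, 2, 7, 4, 6, 8],
   [1, 3, 5, 8, 6, 4, 7, 9, 2], [1, 4, 2, 5, 7, 9, 6, 8, 3], [1, 3, 5, 8, 6, 9, 2, 7, 4],
   [1, 3, 8, 6, 4, 2, 9, 7, 5], [1, 3, 8, 5, 2, 4, 7, 9, 6], [1, 3, 5, 8, 6, 4, 2, 9, 7],
   [1, 3, 5, 2, 4, 7, 9, 6, 8], [1, 3, 5, 8, 6, 4, 2, 7, 9],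
   [1, 3, 5, 7, 10, 8, 6, 4, 9, 2], [1, 4, 2, 5, 7, 9, 6, 8, 10, 3],
   [1, 3, 5, 2, 7, 10, 8, 6, 9, 4], [1, 3, 6, 4, 2, 9, 7, 10, 8, 5],
   [1, 3, 5, 2, 4, 9, 7, 10, 8, 6], [1, 3, 5, 2, 4, 9, 6, 8, 10, 7],
   [1, 3, 5, 2, 4, 6, 9, 7, 10, 8], [1, 3, 5, 2, 4, 6, 8, 10, 7, 9],
   [1, 3, 5, 2, 4, 7, 9, 6, 8, 10],
   [1, 3, 5, 7, 10, 8, 6, 4, 11, 9, 2], [1, 4, 2, 5, 7, 9, 6, 11, 8, 10, 3],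
   [1, 3, 5, 2, 7, 10, 8, 6, 9, 11, 4], [1, 3, 6, 4, 2, 7, 9, 11, 8, 10, 5],
   [1, 3, 5, 2, 4, 7, 10, 8, 11, 9, 6], [1, 3, 5, 2, 4, 6, 9, 11, 8, 10, 7],
   [1, 3, 5, 2, 4, 6, 11, 9, 7, 10, 8], [1, 3, 5, 2, 4, 6, 11, 8, 10, 7, 9],
   [1, 3, 5, 2, 4, 6, 8, 11, 9, 7, 10], [1, 3, 5, 2, 4, 6, 8, 10, 7, 9, 11]]

theorem exists_mem_basePaths : ∀ n ∈ Finset.Icc 6 11, ∀ m ∈ Finset.Icc 2 n,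
    ∃ l ∈ basePaths, IsHamPath n 1 m l := by
  decide

def excursionSplits : List (List ℕ × List ℕ) :=
  [([1, 3, 5], [6, 4, 2]), ([1, 6, 4, 2], [5, 3]), ([1, 3, 5, 2], [6, 4]),
   ([1, 6, 4, 2], [3, 5]), ([1, 4, 2, 5], [3, 6])]

theorem exists_mem_excursionSplits : ∀ m ∈ Finset.Icc 2 6, ∃ p ∈ excursionSplits,
    (p.1 ++ p.2).Perm (List.range' 1 6) ∧ IsPrimeDiffWalk 1 7 (p.1 ++ [7]) ∧
      IsPrimeDiffWalk 8 m (8 :: p.2) := by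
  decide

theorem IsHamPath.exists_six_add {n m : ℕ} {t : List ℕ} (ht : IsHamPath n 1 2 t) (hm : 2 ≤ m)
    (hm6 : m ≤ 6) : ∃ l, IsHamPath (6 + n) 1 m l := by
  obtain ⟨⟨l₁, l₂⟩, -, hperm, h₁, h₂⟩ := exists_mem_excursionSplits m (Finset.mem_Icc.2 ⟨hm, hm6⟩)
  exact ⟨_, .splice hperm h₁ h₂ ht⟩

theorem exists_isHamPath_one {n m : ℕ} (hn : 6 ≤ n) (hm : 2 ≤ m) (hmn : m ≤ n) :
    ∃ l, IsHamPath n 1 m l := by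
  induction n using Nat.strong_induction_on generalizing m with
  | _ n ih =>
  rcases lt_or_ge n 12 with hsmall | hlarge
  · obtain ⟨l, -, hl⟩ :=
      exists_mem_basePaths n (Finset.mem_Icc.2 ⟨hn, by omega⟩) m (Finset.mem_Icc.2 ⟨hm, hmn⟩)
    exact ⟨l, hl⟩
  obtain ⟨k, rfl⟩ : ∃ k, n = 6 + k := ⟨n - 6, by omega⟩
  rcases lt_or_ge m 7 with hm7 | hm7
  · obtain ⟨t, ht⟩ := @ih k (by omega) 2 (by omega) le_rfl (by omega)
    exact ht.exists_six_add hm (by omega)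
  · obtain ⟨t, ht⟩ := @ih (k + 1) (by omega) (m - 5) (by omega) (by omega) (by omega)
    have := ht.prefix_five
    rw [show 5 + (k + 1) = 6 + k by omega, Nat.add_sub_cancel' (by omega)] at this
    exact ⟨_, this⟩

theorem IsHamPath.exists_isPrimeDiffHamPath {n u v : ℕ} {l : List ℕ} (h : IsHamPath n u v l) :
    ∃ a : ℕ → ℤ, IsPrimeDiffHamPath n a ∧ a 0 = u ∧ a (n - 1) = v := by
  obtain ⟨hperm, hchain, hhead, hlast⟩ := h
  have hlen : l.length = n := by simpa using hperm.length_eq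
  have hmem : ∀ x, x ∈ l ↔ 1 ≤ x ∧ x ≤ n := fun x => by
    rw [hperm.mem_iff, List.mem_range'_1]; omega
  have hnodup : l.Nodup := hperm.nodup_iff.2 List.nodup_range'
  have hget : ∀ i (hi : i < n), l.getD i 0 = l[i] := fun i hi => List.getD_eq_getElem _ _ _
  refine ⟨fun i => (l.getD i 0 : ℤ), ⟨⟨?_, ?_, ?_⟩, ?_⟩, ?_, ?_⟩
  · intro i hi
    simp only [Set.mem_Ico] at hi
    have := (hmem l[i]).1 (List.getElem_mem _)
    simp only [hget i hi.2, Set.mem_Icc]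
    omega
  · intro i hi j hj hij
    simp only [Set.mem_Ico] at hi hj
    simp only [hget i hi.2, hget j hj.2, Nat.cast_inj] at hij
    exact hnodup.getElem_inj_iff.1 hij
  · intro x hx
    simp only [Set.mem_Icc] at hx
    lift x to ℕ using by omega
    obtain ⟨i, hi, hix⟩ := List.getElem_of_mem ((hmem x).2 (by omega))
    exact ⟨i, by simp only [Set.mem_Ico]; omega, by simp only [hget i (by omega), hix]⟩
  · intro i hi
    simp only [hget i (by omega), hget (i + 1) hi]
    exact List.isChain_iff_getElem.1 hchain i (by omega)
  · simp [List.getD_eq_getElem?_getD, ← List.head?_eq_getElem?, hhead]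
  · simp [List.getD_eq_getElem?_getD, ← hlen, ← List.getLast?_eq_getElem?, hlast]

theorem prime_diff_ham_path_one_to_m (n m : ℕ) (hn : 6 ≤ n)
    (hm2 : 2 ≤ m) (hmn : m ≤ n) :
    ∃ a : ℕ → ℤ, IsPrimeDiffHamPath n a ∧ a 0 = 1 ∧ a (n - 1) = m := by
  obtain ⟨l, hl⟩ := exists_isHamPath_one hn hm2 hmn
  exact hl.exists_isPrimeDiffHamPath
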